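/- arXiv:1101.3386 — 2 statements merged into one kernel-verified Lean document; each statement's English description precedes it below -/
import Mathlib

section
/- In the folded hypercube FQ_n, for every pair of vertices u, v with I(u,v) ≤ ⌊n/2⌋ − 1, there exists a path from u to v of length I(u,v) + 1 whose first edge is a complementary edge (Dim = 0) and whose remaining edges are hypercube edges with strictly increasing Dim values. -/
/-!
After the complementary edge `u → ū`, the vertex `ū` differs from `v` exactly in the
`I(u,v)` coordinates where `u` and `v` agree. Flipping these coordinates one at a time, in
increasing order, walks along hypercube edges of strictly increasing dimension from `ū` to `v`.
-/

section FlipWalk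

variable {ι : Type*} [DecidableEq ι] {k : ℕ}

def flipWalk (d : Fin k → ι) (x : ι → Bool) (m : Fin (k + 1)) (i : ι) : Bool :=
  if ∃ t : Fin k, t.castSucc < m ∧ d t = i then !x i else x i

variable (d : Fin k → ι) (x : ι → Bool)

theorem flipWalk_zero : flipWalk d x 0 = x := by
  funext i
  simp [flipWalk]

theorem flipWalk_last :
    flipWalk d x (Fin.last k) = fun i => if i ∈ Set.range d then !x i else x i := by
  funext i
  simp [flipWalk, Fin.castSucc_lt_last]

theorem flipWalk_succ (hd : Function.Injective d) (j : Fin k) :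
    flipWalk d x j.succ =
      Function.update (flipWalk d x j.castSucc) (d j) (!flipWalk d x j.castSucc (d j)) := by
  funext i
  rcases eq_or_ne i (d j) with rfl | hij
  · simp [flipWalk, hd.eq_iff]
  · simp [flipWalk, hij, hij.symm, Fin.castSucc_lt_succ_iff, le_iff_eq_or_lt]

end FlipWalk

theorem stmt_6_general (n : ℕ) (u v : Fin n → Bool) :
    ∃ (w : Fin ((Finset.univ.filter (fun i => u i = v i)).card + 2) → (Fin n → Bool))
      (d : Fin (Finset.univ.filter (fun i => u i = v i)).card → Fin n),
      w 0 = u ∧ w (Fin.last _) = v ∧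
      w 1 = (fun i => ! u i) ∧ StrictMono d ∧
      ∀ j, w j.succ.succ =
        Function.update (w j.succ.castSucc) (d j) (! w j.succ.castSucc (d j)) := by
  set s := Finset.univ.filter fun i => u i = v i
  let d := s.orderEmbOfFin rfl
  refine ⟨Fin.cons u (flipWalk d fun i => !u i), d, rfl, ?_, flipWalk_zero _ _, d.strictMono,
    fun j => ?_⟩
  · rw [← Fin.succ_last, Fin.cons_succ, flipWalk_last]
    funext i
    have hrange : i ∈ Set.range d ↔ u i = v i := by simp [d, s]
    by_cases h : u i = v i
    · simp [hrange, h]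
    · simpa [hrange, h] using Bool.eq_not.mpr h
  · simpa only [← Fin.succ_castSucc, Fin.cons_succ] using flipWalk_succ d _ d.injective j

/-- In FQ_n, if `I(u,v) ≤ ⌊n/2⌋ - 1` then there is a path from `u` to `v` of
length `I(u,v) + 1` whose first edge is the complementary edge (Dim = 0) and
whose remaining edges are hypercube edges with strictly increasing
dimensions. -/
theorem stmt_6 (n : ℕ) (u v : Fin n → Bool)
    (hI : (Finset.univ.filter (fun i => u i = v i)).card ≤ n / 2 - 1) :
    ∃ (w : Fin ((Finset.univ.filter (fun i => u i = v i)).card + 2) → (Fin n → Bool))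
      (d : Fin (Finset.univ.filter (fun i => u i = v i)).card → Fin n),
      w 0 = u ∧ w (Fin.last _) = v ∧
      w 1 = (fun i => ! u i) ∧ StrictMono d ∧
      ∀ j, w j.succ.succ =
        Function.update (w j.succ.castSucc) (d j) (! w j.succ.castSucc (d j)) :=
  stmt_6_general n u v
end

section
/- For every natural number k ≥ 1, the central binomial coefficient satisfies C(2k, k) ≥ √(2/π) · 2^{2k} / √(2k+1). -/
/-- For k ≥ 1, `C(2k,k) ≥ √(2/π)·2^{2k}/√(2k+1)`. -/
theorem stmt_7 (k : ℕ) (hk : 1 ≤ k) :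
    (Nat.choose (2 * k) k : ℝ) ≥
      Real.sqrt (2 / Real.pi) * 2 ^ (2 * k) / Real.sqrt (2 * k + 1) := by
  have hπ : 0 < Real.pi := Real.pi_pos
  have hfac : (0:ℝ) < (Nat.factorial k : ℝ) := by positivity
  have hCpos : (0:ℝ) < (Nat.choose (2 * k) k : ℝ) := by
    exact_mod_cast Nat.choose_pos (by omega)
  have hfacid : ((Nat.factorial (2*k)) : ℝ)
      = (Nat.choose (2*k) k : ℝ) * (Nat.factorial k) * (Nat.factorial k) := by
    have := Nat.choose_mul_factorial_mul_factorial (show k ≤ 2*k by omega)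
    rw [show 2*k - k = k by omega] at this
    exact_mod_cast this.symm
  have hW := Real.Wallis.W_le k
  rw [Real.Wallis.W_eq_factorial_ratio] at hW
  rw [hfacid] at hW
  have hden : (0:ℝ) < ((Nat.choose (2*k) k : ℝ) * (Nat.factorial k) * (Nat.factorial k))^2
      * (2*k+1) := by positivity
  rw [div_le_iff₀ hden] at hW
  have hW' : (2:ℝ)^(4*k) * (Nat.factorial k : ℝ)^4
      ≤ Real.pi / 2 * ((Nat.choose (2*k) k : ℝ)^2 * (2*k+1)) * (Nat.factorial k : ℝ)^4 :=
    hW.trans_eq (by ring)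
  have hf4 : (0:ℝ) < (Nat.factorial k : ℝ)^4 := by positivity
  have hW'' : (2:ℝ)^(4*k) ≤ Real.pi / 2 * ((Nat.choose (2*k) k : ℝ)^2 * (2*k+1)) :=
    le_of_mul_le_mul_right hW' hf4
  have key : 2 / Real.pi * 2 ^ (4*k) / (2*k+1) ≤ (Nat.choose (2*k) k : ℝ)^2 := by
    rw [div_le_iff₀ (by positivity : (0:ℝ) < 2*(k:ℝ)+1), div_mul_eq_mul_div,
      div_le_iff₀ hπ]
    nlinarith [hW'']
  have h2 := Real.sqrt_le_sqrt key
  rw [Real.sqrt_sq hCpos.le] at h2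
  refine le_trans (le_of_eq ?_) h2
  have e1 : Real.sqrt (((2:ℝ)^(2*k))^2 / (2*(k:ℝ)+1)) = 2^(2*k) / Real.sqrt (2*(k:ℝ)+1) := by
    rw [Real.sqrt_div (by positivity), Real.sqrt_sq (by positivity)]
  rw [show 2/Real.pi * (2:ℝ)^(4*k)/(2*(k:ℝ)+1) = 2/Real.pi * (((2:ℝ)^(2*k))^2/(2*(k:ℝ)+1)) by
    rw [← pow_mul]; ring_nf]
  rw [Real.sqrt_mul (by positivity), e1, mul_div_assoc]
end
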